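/- arXiv:2512.02267 — 2 statements merged into one kernel-verified Lean document; each statement's English description precedes it below -/
import Mathlib

section
/- (Complementation map properties) Fix n ∈ ℕ and a partition μ with μ₁ ≤ n; set μ₀ = n. For a partition λ with μ_i ≤ λ_i ≤ μ_{i−1} for all i ≥ 1, define λ̃ by λ̃_i = μ_i + μ_{i−1} − λ_i. Then: (1) λ̃ is a partition with μ_i ≤ λ̃_i ≤ μ_{i−1}; (2) λ ↦ λ̃ is an involution; (3) Σ_{i≥1}(λ̃_i − μ_i) = Σ_{i≥1}(μ_{i−1} − λ_i), and in particular, since the telescoping sum Σ_{i≥1}(μ_{i−1} − μ_i) equals μ₀ = n, one has |λ̃/μ| = n − |λ/μ|; (4) odd(λ̃') = n − odd(λ'), where odd(ν) denotes the number of odd parts of ν, so that odd(λ') is the number of odd columns of λ. -/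
open Finset

noncomputable section

/-- `odd(λ')` truncated at `M`: the number of odd columns of the partition `f`. -/
def oddCols (M : ℕ) (f : ℕ → ℕ) : ℕ := ∑ k ∈ Finset.range M, (f (2 * k) - f (2 * k + 1))

/-- complementation map properties: fix `n` and a partition `μ` with `μ₁ ≤ n`;
set `μ₀ = n`.  For a partition `λ` with `μ_i ≤ λ_i ≤ μ_{i−1}`, define `λ̃_i = μ_i + μ_{i−1} − λ_i`.
Then `λ̃` is a partition interlacing `μ` the same way, the map is an involution,
`Σ(λ̃_i − μ_i) = Σ(μ_{i−1} − λ_i)` and in particular `|λ̃/μ| = n − |λ/μ|`, and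
`odd(λ̃') = n − odd(λ')`. -/
theorem complementation_map_properties (n L : ℕ) (μ lam : ℕ → ℕ)
    (hμanti : ∀ i, μ (i + 1) ≤ μ i) (hμ0 : ∀ i, L ≤ i → μ i = 0) (hμn : μ 0 ≤ n) :
    let μprev : ℕ → ℕ := fun i => match i with | 0 => n | j + 1 => μ j
    let tilde : ℕ → ℕ := fun i => μ i + μprev i - lam i
    (∀ i, μ i ≤ lam i) → (∀ i, lam i ≤ μprev i) →
    -- (1) λ̃ is a partition interlacing μ with μ₀ = n
    ((∀ i, μ i ≤ tilde i ∧ tilde i ≤ μprev i) ∧ (∀ i, tilde (i + 1) ≤ tilde i)) ∧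
    -- (2) the map is an involution
    (∀ i, μ i + μprev i - tilde i = lam i) ∧
    -- (3) the sum identity and |λ̃/μ| = n − |λ/μ|
    (∀ M : ℕ, L + 1 ≤ M →
      (∑ i ∈ Finset.range M, (tilde i - μ i)) = (∑ i ∈ Finset.range M, (μprev i - lam i)) ∧
      (∑ i ∈ Finset.range M, (tilde i - μ i)) = n - ∑ i ∈ Finset.range M, (lam i - μ i)) ∧
    -- (4) odd(λ̃') = n − odd(λ')
    (∀ M : ℕ, L + 1 ≤ M → oddCols M tilde = n - oddCols M lam) := by

  intro μprev tilde hlow hup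
  have hpm : ∀ i, μ i ≤ μprev i := by
    intro i
    match i with
    | 0 => exact hμn
    | j + 1 => exact hμanti j
  -- cast lemma
  have cast_sub : ∀ (M : ℕ) (f g : ℕ → ℕ), (∀ i, g i ≤ f i) →
      ((∑ i ∈ Finset.range M, (f i - g i) : ℕ) : ℤ) = ∑ i ∈ Finset.range M, ((f i : ℤ) - g i) := by
    intro M f g h
    rw [Nat.cast_sum]
    exact Finset.sum_congr rfl fun i _ => by
      have := h i; push_cast [Nat.cast_sub (h i)]; ring
  refine ⟨⟨fun i => ?_, fun i => ?_⟩, fun i => ?_, fun M hM => ?_, fun M hM => ?_⟩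
  · have h1 := hlow i; have h2 := hup i; have h3 := hpm i
    simp only [tilde]; omega
  · have h1 := hlow (i + 1); have h2 := hup i; have h3 := hlow i
    have h4 : μprev (i + 1) = μ i := rfl
    simp only [tilde]; omega
  · have h1 := hlow i; have h2 := hup i
    simp only [tilde]; omega
  · -- part (3)
    have hfirst : (∑ i ∈ Finset.range M, (tilde i - μ i)) =
        ∑ i ∈ Finset.range M, (μprev i - lam i) := by
      refine Finset.sum_congr rfl fun i _ => ?_
      have h1 := hlow i; have h2 := hup i
      simp only [tilde]; omega
    refine ⟨hfirst, ?_⟩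
    have htm : ∀ i, μ i ≤ tilde i := by
      intro i; have h1 := hlow i; have h2 := hup i; simp only [tilde]; omega
    have hμprevM : μprev M = 0 := by
      obtain ⟨M', rfl⟩ : ∃ M', M = M' + 1 := ⟨M - 1, by omega⟩
      exact hμ0 M' (by omega)
    have htel : ∑ i ∈ Finset.range M, ((μprev i : ℤ) - μ i) = (n : ℤ) - μprev M :=
      Finset.sum_range_sub' (fun i => (μprev i : ℤ)) M
    have hc1 := cast_sub M μprev lam hup
    have hc2 := cast_sub M lam μ hlow
    have hsplit : ∑ i ∈ Finset.range M, ((μprev i : ℤ) - lam i) =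
        (∑ i ∈ Finset.range M, ((μprev i : ℤ) - μ i)) -
          ∑ i ∈ Finset.range M, ((lam i : ℤ) - μ i) := by
      rw [← Finset.sum_sub_distrib]
      exact Finset.sum_congr rfl fun i _ => by ring
    have key : ((∑ i ∈ Finset.range M, (μprev i - lam i) : ℕ) : ℤ) =
        (n : ℤ) - ((∑ i ∈ Finset.range M, (lam i - μ i) : ℕ) : ℤ) := by
      rw [hc1, hc2, hsplit, htel, hμprevM]; push_cast; ring
    rw [hfirst]
    omega
  · -- part (4)
    have hcast_t : ∀ i, (tilde i : ℤ) = (μ i : ℤ) + μprev i - lam i := by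
      intro i
      have h2 := hup i
      simp only [tilde]
      have : lam i ≤ μ i + μprev i := le_trans h2 (Nat.le_add_left _ _)
      push_cast [Nat.cast_sub this]; ring
    have htmono : ∀ k, tilde (2 * k + 1) ≤ tilde (2 * k) := by
      intro k
      have h1 := hlow (2 * k + 1); have h2 := hup (2 * k); have h3 := hlow (2 * k)
      have h4 : μprev (2 * k + 1) = μ (2 * k) := rfl
      simp only [tilde]; omega
    have hlmono : ∀ k, lam (2 * k + 1) ≤ lam (2 * k) := by
      intro k
      have h1 := hup (2 * k + 1); have h2 := hlow (2 * k)
      have h4 : μprev (2 * k + 1) = μ (2 * k) := rfl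
      omega
    have hct : ((oddCols M tilde : ℕ) : ℤ) =
        ∑ k ∈ Finset.range M, ((tilde (2 * k) : ℤ) - tilde (2 * k + 1)) :=
      cast_sub M (fun k => tilde (2 * k)) (fun k => tilde (2 * k + 1)) htmono
    have hcl : ((oddCols M lam : ℕ) : ℤ) =
        ∑ k ∈ Finset.range M, ((lam (2 * k) : ℤ) - lam (2 * k + 1)) :=
      cast_sub M (fun k => lam (2 * k)) (fun k => lam (2 * k + 1)) hlmono
    have hμprev2M : μprev (2 * M) = 0 := by
      obtain ⟨M', hM'⟩ : ∃ M', 2 * M = M' + 1 := ⟨2 * M - 1, by omega⟩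
      rw [hM']
      exact hμ0 M' (by omega)
    have htel2 : ∑ k ∈ Finset.range M, ((μprev (2 * k) : ℤ) - μprev (2 * (k + 1))) =
        (n : ℤ) - μprev (2 * M) :=
      Finset.sum_range_sub' (fun k => (μprev (2 * k) : ℤ)) M
    have hsplit : ∑ k ∈ Finset.range M, ((tilde (2 * k) : ℤ) - tilde (2 * k + 1)) =
        (∑ k ∈ Finset.range M, ((μprev (2 * k) : ℤ) - μprev (2 * (k + 1)))) -
          ∑ k ∈ Finset.range M, ((lam (2 * k) : ℤ) - lam (2 * k + 1)) := by
      rw [← Finset.sum_sub_distrib]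
      refine Finset.sum_congr rfl fun k _ => ?_
      rw [hcast_t (2 * k), hcast_t (2 * k + 1)]
      have e1 : μprev (2 * k + 1) = μ (2 * k) := rfl
      have e2 : μprev (2 * (k + 1)) = μ (2 * k + 1) := rfl
      rw [e1, e2]; ring
    have key : ((oddCols M tilde : ℕ) : ℤ) = (n : ℤ) - ((oddCols M lam : ℕ) : ℤ) := by
      rw [hct, hcl, hsplit, htel2, hμprev2M]; push_cast; ring
    omega
end
end

section
/- For a partition λ with λ₁ ≤ 1 and μ ⊆ λ, the skew q-Whittaker polynomial satisfies P_{λ/μ}(x;q,0) = [(q;q)_{1−λ₁}/(1−q)] ∮ Q_{λ'}(y;0,q) P_{μ'}(y^{−1};0,q) Π_{j=1}^N (1+y^{−1}x_j) dy/(2πi y), where the contour is a circle centered at the origin. -/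
open Finset
open scoped Classical

noncomputable section

/-- `qPochQ q m = (q;q)_m = ∏_{i=1}^m (1 - q^i)`. -/
def qPochQ (q : ℂ) (m : ℕ) : ℂ := ∏ i ∈ Finset.range m, (1 - q ^ (i + 1))

/-- Elementary symmetric polynomial `e_m(x₁,…,x_N)`. -/
def esym {N : ℕ} (x : Fin N → ℂ) (m : ℕ) : ℂ :=
  ∑ S ∈ (Finset.univ : Finset (Fin N)).powersetCard m, ∏ j ∈ S, x j

/-- The single-column skew `q`-Whittaker polynomial `P_{(1^k)/(1^l)}(x₁,…,x_N;q,0)`,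
defined by the branching rule from the one-variable case
`P_{(1^k)/(1^j)}(x;q,0) = x^{k−j}` for `k−1 ≤ j ≤ k` (and `0` otherwise). -/
def qWcol : List ℂ → ℕ → ℕ → ℂ
  | [], k, l => if k = l then 1 else 0
  | x :: xs, k, l =>
      ∑ j ∈ Finset.range (k + 1),
        (if j ≤ k ∧ k ≤ j + 1 then x ^ (k - j) else 0) * qWcol xs j l

/-- Elementary symmetric functions of a list. -/
def eL : List ℂ → ℕ → ℂ
  | [], 0 => 1
  | [], _ + 1 => 0
  | a :: as, 0 => eL as 0
  | a :: as, m + 1 => eL as (m + 1) + a * eL as m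

lemma eL_zero (as : List ℂ) : eL as 0 = 1 := by
  induction as with
  | nil => rfl
  | cons a as ih => simpa [eL] using ih

lemma qWcol_cons (a : ℂ) (as : List ℂ) (k l : ℕ) :
    qWcol (a :: as) k l
      = qWcol as k l + (if 1 ≤ k then a * qWcol as (k - 1) l else 0) := by
  cases k with
  | zero => simp [qWcol]
  | succ k' =>
      show (∑ j ∈ Finset.range (k' + 1 + 1),
        (if j ≤ k' + 1 ∧ k' + 1 ≤ j + 1 then a ^ (k' + 1 - j) else 0) * qWcol as j l) = _
      rw [Finset.sum_range_succ, Finset.sum_range_succ]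
      have h0 : ∀ j ∈ Finset.range k',
          (if j ≤ k' + 1 ∧ k' + 1 ≤ j + 1 then a ^ (k' + 1 - j) else 0) * qWcol as j l = 0 := by
        intro j hj
        rw [Finset.mem_range] at hj
        rw [if_neg (by omega)]
        ring
      rw [Finset.sum_eq_zero h0]
      have h1 : k' + 1 - k' = 1 := by omega
      simp [h1]
      ring

lemma qWcol_eq_eL (as : List ℂ) (k l : ℕ) :
    qWcol as k l = if l ≤ k then eL as (k - l) else 0 := by
  induction as generalizing k with
  | nil =>
      show (if k = l then 1 else 0) = _
      rcases Nat.lt_trichotomy k l with h | h | h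
      · rw [if_neg (by omega), if_neg (by omega)]
      · subst h; simp [eL_zero]
      · rw [if_neg (by omega), if_pos (by omega)]
        have : ∃ m, k - l = m + 1 := ⟨k - l - 1, by omega⟩
        obtain ⟨m, hm⟩ := this
        rw [hm]; rfl
  | cons a as ih =>
      rw [qWcol_cons, ih, ih]
      rcases Nat.lt_trichotomy k l with h | h | h
      · have h1 : ¬ l ≤ k := by omega
        have h2 : ¬ l ≤ k - 1 := by omega
        simp [h1, h2]
      · subst h
        rcases Nat.eq_zero_or_pos k with hk | hk
        · subst hk
          simp [show eL (a :: as) 0 = eL as 0 from rfl]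
        · have h2 : ¬ k ≤ k - 1 := by omega
          simp [h2, Nat.sub_self, show eL (a :: as) 0 = eL as 0 from rfl]
      · have h1 : l ≤ k := by omega
        have h2 : l ≤ k - 1 := by omega
        have h3 : 1 ≤ k := by omega
        simp only [if_pos h1, if_pos h2, if_pos h3]
        rw [show k - l = (k - 1 - l) + 1 by omega]
        show _ = eL as (k - 1 - l + 1) + a * eL as (k - 1 - l)
        congr 2 <;> omega

lemma esymm_cons (a : ℂ) (s : Multiset ℂ) (n : ℕ) :
    (a ::ₘ s).esymm (n + 1) = s.esymm (n + 1) + a * s.esymm n := by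
  unfold Multiset.esymm
  rw [Multiset.powersetCard_cons, Multiset.map_add, Multiset.sum_add, Multiset.map_map]
  congr 1
  rw [show (Multiset.prod ∘ fun t => a ::ₘ t) = fun t : Multiset ℂ => a * t.prod by
        funext t; simp, ← Multiset.sum_map_mul_left]

lemma eL_eq_esymm (as : List ℂ) (m : ℕ) : eL as m = (↑as : Multiset ℂ).esymm m := by
  induction as generalizing m with
  | nil =>
      cases m with
      | zero => simp [eL, Multiset.esymm, Multiset.powersetCard_zero_left]
      | succ m => simp [eL, Multiset.esymm, Multiset.powersetCard_zero_right]
  | cons a as ih =>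
      cases m with
      | zero =>
          rw [show eL (a :: as) 0 = eL as 0 from rfl, eL_zero]
          simp [Multiset.esymm, Multiset.powersetCard_zero_left]
      | succ m =>
          rw [show ((a :: as : List ℂ) : Multiset ℂ) = a ::ₘ (↑as : Multiset ℂ) from rfl,
            esymm_cons, ← ih, ← ih]
          rfl

lemma esym_eq_eL {N : ℕ} (x : Fin N → ℂ) (m : ℕ) : esym x m = eL (List.ofFn x) m := by
  rw [eL_eq_esymm, List.ofFn_eq_map]
  have : ((List.finRange N).map x : Multiset ℂ)
      = (Finset.univ : Finset (Fin N)).val.map x := by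
    congr 1
  rw [this, Finset.esymm_map_val]
  rfl

lemma esym_eq_zero {N : ℕ} (x : Fin N → ℂ) (m : ℕ) (hm : N < m) : esym x m = 0 := by
  unfold esym
  rw [Finset.powersetCard_eq_empty.2 (by simpa using hm), Finset.sum_empty]

/-- one-variable contour integral formula for skew `q`-Whittaker, `n = 1`:
for `λ = (1^k)` (so `λ₁ ≤ 1`) and `μ = (1^l) ⊆ λ`,
`P_{λ/μ}(x;q,0) = [(q;q)_{1−λ₁}/(1−q)] ∮ Q_{λ'}(y;0,q) P_{μ'}(y⁻¹;0,q) ∏_j (1+y⁻¹x_j) dy/(2πiy)`,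
where `Q_{(k)}(y;0,q) = (1−q) y^k` for `k ≥ 1` (`= 1` for `k = 0`), `P_{(l)}(y⁻¹;0,q) = y^{−l}`,
and the contour integral extracts the constant term of the Laurent expansion
`∏_j (1 + y⁻¹ x_j) = Σ_m e_m(x) y^{−m}`, i.e. the single coefficient with `m = k − l`. -/
theorem qWhittaker_column_contour_integral (N : ℕ) (x : Fin N → ℂ) (q : ℂ) (hq : q ≠ 1)
    (k l : ℕ) (hl : l ≤ k) :
    qWcol (List.ofFn x) k l
      = qPochQ q (1 - min k 1) / (1 - q) *
          ((if k = 0 then 1 else 1 - q) *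
            ∑ m ∈ Finset.range (N + 1),
              if (k : ℤ) - (l : ℤ) - (m : ℤ) = 0 then esym x m else 0) := by
  have hq' : (1 : ℂ) - q ≠ 0 := sub_ne_zero.2 (Ne.symm hq)
  have hsum : (∑ m ∈ Finset.range (N + 1),
      if (k : ℤ) - (l : ℤ) - (m : ℤ) = 0 then esym x m else 0) = esym x (k - l) := by
    by_cases hN : k - l ≤ N
    · rw [Finset.sum_eq_single (k - l)]
      · rw [if_pos (by omega)]
      · intro m _ hm
        rw [if_neg (by omega)]
      · intro h
        exact absurd (Finset.mem_range.2 (by omega)) h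
    · rw [esym_eq_zero x _ (by omega)]
      apply Finset.sum_eq_zero
      intro m hm
      rw [Finset.mem_range] at hm
      rw [if_neg (by omega)]
  rw [hsum, qWcol_eq_eL, if_pos hl, esym_eq_eL]
  rcases Nat.eq_zero_or_pos k with hk | hk
  · subst hk
    simp [qPochQ, Finset.prod_range_succ, div_self hq']
  · rw [if_neg (by omega), show 1 - min k 1 = 0 by omega]
    simp [qPochQ]
    field_simp

end
end
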